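/- arXiv:1711.01677 — 2 statements merged into one kernel-verified Lean document; each statement's English description precedes it below -/
import Mathlib

section
/- Let λ > 0, p > 1, ε ∈ (0, 1/2), a ≥ 0, η ≥ 0 with a + η > 0, k > 1 and χ₀ > 0. Write f := p·λ² + p − 2p·λ + 4ε·p·λ + 4λ − 4ε·λ (which is positive) and assume the smallness condition ((1 − λ + 2λε)₊·p + √(p·f))·χ₀ ≤ 2(1 − ε)·k·(a + η)^{k−1}. Set r := λ·(p − 1)·χ₀·√(p/f). Then for every s ≥ η, H(s) := (f/(4λ²(1 − ε)(p − 1)(a + s)^{2k}))·r² + ((1 − λ + 2λε)₊·p·χ₀/(2λ(1 − ε)(a + s)^{2k}) − k/(λ(a + s)^{k+1}))·r + p(p − 1)·χ₀²/(4(1 − ε)(a + s)^{2k}) ≤ 0. -/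
set_option maxHeartbeats 1000000 in
theorem stmt_6 (lam p ε a η k χ₀ : ℝ) (hlam : 0 < lam) (hp : 1 < p)
    (hε0 : 0 < ε) (hε1 : ε < 1/2) (ha : 0 ≤ a) (hη : 0 ≤ η) (haη : 0 < a + η)
    (hk : 1 < k) (hχ₀ : 0 < χ₀)
    (f : ℝ) (hf : f = p * lam ^ 2 + p - 2 * p * lam + 4 * ε * p * lam + 4 * lam - 4 * ε * lam)
    (hsmall : (max (1 - lam + 2 * lam * ε) 0 * p + Real.sqrt (p * f)) * χ₀ ≤
      2 * (1 - ε) * k * (a + η) ^ (k - 1))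
    (r : ℝ) (hr : r = lam * (p - 1) * χ₀ * Real.sqrt (p / f)) :
    ∀ s : ℝ, η ≤ s →
      (f / (4 * lam ^ 2 * (1 - ε) * (p - 1) * (a + s) ^ (2 * k))) * r ^ 2 +
        (max (1 - lam + 2 * lam * ε) 0 * p * χ₀ / (2 * lam * (1 - ε) * (a + s) ^ (2 * k))
          - k / (lam * (a + s) ^ (k + 1))) * r +
        p * (p - 1) * χ₀ ^ 2 / (4 * (1 - ε) * (a + s) ^ (2 * k)) ≤ 0 := by
  intro s hs
  have hx : 0 < a + s := by linarith
  have hε' : (0:ℝ) < 1 - ε := by linarith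
  have hp0 : (0:ℝ) < p := by linarith
  have hf0 : 0 < f := by
    have h1 : 0 ≤ p * (lam - 1) ^ 2 := by positivity
    have h2 : 0 < ε * lam * (p - 1) := by
      apply mul_pos (mul_pos hε0 hlam); linarith
    nlinarith [h1, h2, hlam]
  set M := max (1 - lam + 2 * lam * ε) 0 with hM
  have hM0 : 0 ≤ M := le_max_right _ _
  set q := Real.sqrt (p * f) with hq
  set sp := Real.sqrt (p / f) with hsp
  have hsp0 : 0 ≤ sp := Real.sqrt_nonneg _
  have hq0 : 0 ≤ q := Real.sqrt_nonneg _
  have hsp2 : sp ^ 2 = p / f := Real.sq_sqrt (by positivity)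
  have hpsp : q * sp = p := by
    rw [hq, hsp, ← Real.sqrt_mul (by positivity)]
    rw [show p * f * (p / f) = p ^ 2 by field_simp]
    exact Real.sqrt_sq hp0.le
  set X := (a + s) ^ (2 * k) with hX
  set Y := (a + s) ^ (k + 1) with hY
  have hXpos : 0 < X := Real.rpow_pos_of_pos hx _
  have hYpos : 0 < Y := Real.rpow_pos_of_pos hx _
  have hXY : X = Y * (a + s) ^ (k - 1) := by
    rw [hX, hY, ← Real.rpow_add hx]
    congr 1; ring
  have hmono : (a + η) ^ (k - 1) ≤ (a + s) ^ (k - 1) :=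
    Real.rpow_le_rpow haη.le (by linarith) (by linarith)
  have hkey : (M * p + q) * χ₀ ≤ 2 * (1 - ε) * k * (a + s) ^ (k - 1) := by
    refine hsmall.trans ?_
    have h2k : (0:ℝ) ≤ 2 * (1 - ε) * k := by nlinarith
    exact mul_le_mul_of_nonneg_left hmono h2k
  have hmain : (q + M * p) * χ₀ * Y ≤ 2 * (1 - ε) * k * X := by
    rw [hXY]
    nlinarith [mul_le_mul_of_nonneg_right hkey hYpos.le]
  have hr2 : r ^ 2 = lam ^ 2 * (p - 1) ^ 2 * χ₀ ^ 2 * (p / f) := by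
    rw [hr, show (lam * (p - 1) * χ₀ * sp) ^ 2 = lam ^ 2 * (p - 1) ^ 2 * χ₀ ^ 2 * sp ^ 2 by ring,
      hsp2]
  rw [hr2, hr]
  rw [← hpsp] at hmain ⊢
  have h1 : (0:ℝ) < q * sp - 1 := by rw [hpsp]; linarith
  have h2 : ((q * sp - 1) * χ₀ * sp) *
      (((q + M * (q * sp)) * χ₀ * Y - 2 * (1 - ε) * k * X) / (2 * (1 - ε) * X * Y)) ≤ 0 := by
    apply mul_nonpos_of_nonneg_of_nonpos
    · exact mul_nonneg (mul_nonneg (by linarith) hχ₀.le) hsp0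
    · apply div_nonpos_of_nonpos_of_nonneg
      · linarith
      · positivity
  convert h2 using 1
  field_simp
  ring
end

section
/- Let n ≥ 2 be a natural number, λ > 0, k > 1, a ≥ 0, η ≥ 0 with a + η > 0, and suppose χ₀ > 0 satisfies χ₀ < 4k(a + η)^{k−1}/((1 − λ)₊·n + √(n(nλ² − 2nλ + n + 8λ))). Then there exist a real number p > n/2 and ε ∈ (0, 1/2) such that ((1 − λ + 2λε)₊·p + √(p·(pλ² + p − 2pλ + 4εpλ + 4λ − 4ελ)))·χ₀ ≤ 2(1 − ε)·k·(a + η)^{k−1}. -/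
open Topology Filter

theorem stmt_7 (n : ℕ) (hn : 2 ≤ n) (lam k a η χ₀ : ℝ) (hlam : 0 < lam)
    (hk : 1 < k) (ha : 0 ≤ a) (hη : 0 ≤ η) (haη : 0 < a + η) (hχ₀ : 0 < χ₀)
    (hsmall : χ₀ < 4 * k * (a + η) ^ (k - 1) /
      (max (1 - lam) 0 * n + Real.sqrt (n * (n * lam ^ 2 - 2 * n * lam + n + 8 * lam)))) :
    ∃ p ε : ℝ, (n : ℝ) / 2 < p ∧ 0 < ε ∧ ε < 1/2 ∧
      (max (1 - lam + 2 * lam * ε) 0 * p +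
        Real.sqrt (p * (p * lam ^ 2 + p - 2 * p * lam + 4 * ε * p * lam + 4 * lam - 4 * ε * lam)))
        * χ₀ ≤ 2 * (1 - ε) * k * (a + η) ^ (k - 1) := by
  have hn0 : (0:ℝ) < n := by positivity
  set A : ℝ := (n:ℝ) * ((n:ℝ) * lam ^ 2 - 2 * (n:ℝ) * lam + (n:ℝ) + 8 * lam) with hAdef
  have hA : 0 < A := by
    have h1 : A = (n:ℝ) * ((n:ℝ) * (lam - 1) ^ 2 + 8 * lam) := by rw [hAdef]; ring
    have h2 : (0:ℝ) ≤ (n:ℝ) * (lam - 1) ^ 2 := by positivity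
    nlinarith
  have hsA : 0 < Real.sqrt A := Real.sqrt_pos.mpr hA
  have hD : 0 < max (1 - lam) 0 * n + Real.sqrt A := by
    have : (0:ℝ) ≤ max (1 - lam) 0 * n := by positivity
    linarith
  have hχD : χ₀ * (max (1 - lam) 0 * n + Real.sqrt A) < 4 * k * (a + η) ^ (k - 1) :=
    (lt_div_iff₀ hD).mp hsmall
  set h : ℝ → ℝ := fun t =>
    (max (1 - lam + 2 * lam * t) 0 * ((n:ℝ)/2 + t) +
      Real.sqrt (((n:ℝ)/2 + t) * (((n:ℝ)/2 + t) * lam ^ 2 + ((n:ℝ)/2 + t)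
        - 2 * ((n:ℝ)/2 + t) * lam + 4 * t * ((n:ℝ)/2 + t) * lam + 4 * lam - 4 * t * lam)))
      * χ₀ - 2 * (1 - t) * k * (a + η) ^ (k - 1) with hhdef
  have hcont : Continuous h := by
    rw [hhdef]; fun_prop
  have h0 : h 0 < 0 := by
    have harg : ((n:ℝ)/2 + 0) * (((n:ℝ)/2 + 0) * lam ^ 2 + ((n:ℝ)/2 + 0)
        - 2 * ((n:ℝ)/2 + 0) * lam + 4 * 0 * ((n:ℝ)/2 + 0) * lam + 4 * lam - 4 * 0 * lam)
        = A / 4 := by rw [hAdef]; ring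
    have hsq : Real.sqrt (A / 4) = Real.sqrt A / 2 := by
      rw [Real.sqrt_div hA.le, show (4:ℝ) = 2 ^ 2 by norm_num,
        Real.sqrt_sq (by norm_num : (0:ℝ) ≤ 2)]
    have hmax : (1 - lam + 2 * lam * 0) = 1 - lam := by ring
    rw [hhdef]
    simp only [harg, hsq, hmax]
    nlinarith [hχD]
  have hev : ∀ᶠ t in 𝓝 (0:ℝ), h t < 0 :=
    (hcont.continuousAt).eventually_lt continuousAt_const h0
  have hev2 : ∀ᶠ t in 𝓝 (0:ℝ), t < 1/2 := eventually_lt_nhds (by norm_num)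
  have hev3 : ∀ᶠ t in 𝓝[Set.Ioi (0:ℝ)] 0, h t < 0 ∧ t < 1/2 ∧ 0 < t :=
    (((hev.and hev2).filter_mono nhdsWithin_le_nhds).and eventually_mem_nhdsWithin).mono
      (fun t ht => ⟨ht.1.1, ht.1.2, ht.2⟩)
  obtain ⟨t, ht0, ht2, htpos⟩ := hev3.exists
  refine ⟨(n:ℝ)/2 + t, t, by linarith, htpos, ht2, ?_⟩
  have := ht0
  rw [hhdef] at this
  simp only at this
  linarith
end
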